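/- arXiv:2204.02015 — 2 statements merged into one kernel-verified Lean document; each statement's English description precedes it below -/
import Mathlib

section
/- (Lemma 3.3: weighted L² bound for the rescaled fractional kernel operator.) Let δ < α < 1. There exists a constant C > 0, depending only on δ, γ and α, such that for every continuously differentiable function v : [0,1] → ℝ, ∫_0^1 (1-t)^α t^{2/γ - 1} · ( (1/Γ(1-δ)) ∫_0^t (t^{1/γ} - z^{1/γ})^{-δ} v'(z) dz )² dt ≤ C ∫_0^1 (1-t)^{1-α} (v'(t))² dt. -/
open MeasureTheory Real

/-- The ψ-Caputo derivative for `ψ(t)=t^{1/γ}` on `(0,1)`, written in terms of `v'`: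
`^C D^{δ,ψ}_t v(t) = (1/Γ(1-δ)) ∫_0^t (t^{1/γ} - z^{1/γ})^{-δ} v'(z) dz`. -/
noncomputable def psiCaputo (δ γ : ℝ) (v' : ℝ → ℝ) (t : ℝ) : ℝ :=
  (1 / Real.Gamma (1 - δ)) * ∫ z in (0:ℝ)..t, (t ^ (1/γ) - z ^ (1/γ)) ^ (-δ) * v' z

/-!
For `1/γ ≥ 1` one has `t^{1/γ} - z^{1/γ} ≥ t^{1/γ-1} (t - z)`, so the ψ-Caputo kernel is dominated
by `t^{-(1/γ-1)δ} (t - z)^{-δ}`. Cauchy–Schwarz against the integrable weight `(t - z)^{-δ}` then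
bounds `t^{2/γ-1} (ᶜD^{δ,ψ}_t v)²` by `((1-δ) Γ(1-δ)²)⁻¹ ∫_0^t (t - z)^{-δ} v'(z)² dz`, the leftover
power of `t` having exponent `2(1-δ)/γ + δ ≥ 0`. After exchanging the order of integration,
`∫_z^1 (1-t)^α (t-z)^{-δ} dt ≤ (1-z)^{α+1-δ}/(1-δ) ≤ (1-z)^{1-α}/(1-δ)` because `δ ≤ 2α`.
The estimates are carried out for lower Lebesgue integrals, which needs no integrability of the
left-hand side.
-/

open Set
open scoped ENNReal

theorem rpow_sub_one_mul_sub_le_rpow_sub_rpow {m t z : ℝ} (hm : 1 ≤ m) (hz : 0 ≤ z)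
    (hzt : z ≤ t) : t ^ (m - 1) * (t - z) ≤ t ^ m - z ^ m := by
  have hsplit : ∀ x : ℝ, 0 ≤ x → x ^ m = x ^ (m - 1) * x := fun x hx => by
    rw [← rpow_add_one' hx (by linarith)]; ring_nf
  rw [hsplit t (hz.trans hzt), hsplit z hz]
  nlinarith [rpow_le_rpow hz hzt (by linarith : 0 ≤ m - 1)]

theorem rpow_sub_rpow_rpow_neg_le {m t z δ : ℝ} (hm : 1 ≤ m) (hδ : 0 < δ) (hz : 0 ≤ z)
    (hzt : z ≤ t) : (t ^ m - z ^ m) ^ (-δ) ≤ t ^ (-((m - 1) * δ)) * (t - z) ^ (-δ) := by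
  rcases hzt.eq_or_lt with rfl | hzt
  · simp [zero_rpow (neg_ne_zero.2 hδ.ne')]
  have ht : 0 < t := hz.trans_lt hzt
  calc (t ^ m - z ^ m) ^ (-δ) ≤ (t ^ (m - 1) * (t - z)) ^ (-δ) :=
        rpow_le_rpow_of_nonpos (by have := rpow_pos_of_pos ht (m - 1); nlinarith)
          (rpow_sub_one_mul_sub_le_rpow_sub_rpow hm hz hzt.le) (by linarith)
    _ = t ^ (-((m - 1) * δ)) * (t - z) ^ (-δ) := by
        rw [mul_rpow (rpow_nonneg ht.le _) (by linarith), ← rpow_mul ht.le]; ring_nf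

theorem sq_lintegral_mul_le {α : Type*} [MeasurableSpace α] {μ : Measure α} {k f : α → ℝ≥0∞}
    (hk : AEMeasurable k μ) (hf : AEMeasurable f μ) :
    (∫⁻ x, k x * f x ∂μ) ^ 2 ≤ (∫⁻ x, k x ∂μ) * ∫⁻ x, k x * f x ^ 2 ∂μ := by
  have h := ENNReal.lintegral_mul_norm_pow_le (g := fun x => k x * f x ^ 2) hk
    (hk.mul (hf.pow_const 2)) (p := 1/2) (q := 1/2)
    (by norm_num) (by norm_num) (by norm_num)
  have hsq : ∀ x, k x ^ (1/2 : ℝ) * (k x * f x ^ 2) ^ (1/2 : ℝ) = k x * f x := fun x => by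
    rw [ENNReal.mul_rpow_of_nonneg _ _ (by norm_num), ← mul_assoc, ← ENNReal.rpow_add_of_nonneg,
      ← ENNReal.rpow_natCast, ← ENNReal.rpow_mul] <;> norm_num
  simp only [hsq] at h
  calc (∫⁻ x, k x * f x ∂μ) ^ 2
      ≤ ((∫⁻ x, k x ∂μ) ^ (1/2 : ℝ) * (∫⁻ x, k x * f x ^ 2 ∂μ) ^ (1/2 : ℝ)) ^ 2 := by gcongr
    _ = (∫⁻ x, k x ∂μ) * ∫⁻ x, k x * f x ^ 2 ∂μ := by
      rw [mul_pow, ← ENNReal.rpow_natCast, ← ENNReal.rpow_natCast (_ ^ _), ← ENNReal.rpow_mul,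
        ← ENNReal.rpow_mul]; norm_num

theorem lintegral_Ioc_ofReal_eq_intervalIntegral {f : ℝ → ℝ} {a b : ℝ} (hab : a ≤ b)
    (hf : IntervalIntegrable f volume a b) (hf0 : ∀ x ∈ Ioc a b, 0 ≤ f x) :
    ∫⁻ x in Ioc a b, ENNReal.ofReal (f x) = ENNReal.ofReal (∫ x in a..b, f x) := by
  rw [intervalIntegral.integral_of_le hab, ofReal_integral_eq_lintegral_ofReal
    ((intervalIntegrable_iff_integrableOn_Ioc_of_le hab).1 hf)
    ((ae_restrict_iff' measurableSet_Ioc).2 (ae_of_all _ hf0))]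

theorem lintegral_Ioc_sub_rpow {a b r : ℝ} (hab : a ≤ b) (hr : -1 < r) :
    ∫⁻ x in Ioc a b, ENNReal.ofReal ((b - x) ^ r) =
      ENNReal.ofReal ((b - a) ^ (r + 1) / (r + 1)) := by
  have hint : IntervalIntegrable (fun x => (b - x) ^ r) volume a b := by
    simpa using ((intervalIntegral.intervalIntegrable_rpow' hr).comp_sub_left b (a := 0)
      (b := b - a)).symm
  rw [lintegral_Ioc_ofReal_eq_intervalIntegral hab hint
    fun x hx => rpow_nonneg (by linarith [hx.2]) _,
    intervalIntegral.integral_comp_sub_left (fun x => x ^ r), integral_rpow (.inl hr), sub_self,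
    zero_rpow (by linarith), sub_zero]

theorem lintegral_Ioc_rpow_sub {a b r : ℝ} (hab : a ≤ b) (hr : -1 < r) :
    ∫⁻ x in Ioc a b, ENNReal.ofReal ((x - a) ^ r) =
      ENNReal.ofReal ((b - a) ^ (r + 1) / (r + 1)) := by
  have hint : IntervalIntegrable (fun x => (x - a) ^ r) volume a b := by
    simpa using (intervalIntegral.intervalIntegrable_rpow' hr).comp_sub_right a (a := 0)
      (b := b - a)
  rw [lintegral_Ioc_ofReal_eq_intervalIntegral hab hint
    fun x hx => rpow_nonneg (by linarith [hx.1]) _,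
    intervalIntegral.integral_comp_sub_right (fun x => x ^ r), integral_rpow (.inl hr), sub_self,
    zero_rpow (by linarith), sub_zero]

theorem lintegral_Ioc_lintegral_Ioc_swap {f : ℝ → ℝ → ℝ≥0∞}
    (hf : Measurable (Function.uncurry f)) (a b : ℝ) :
    ∫⁻ t in Ioc a b, ∫⁻ z in Ioc a t, f t z = ∫⁻ z in Ioc a b, ∫⁻ t in Ioc z b, f t z := by
  set g : ℝ → ℝ → ℝ≥0∞ := fun t z => {p : ℝ × ℝ | p.2 ≤ p.1}.indicator (Function.uncurry f) (t, z)
  have hg : Measurable (Function.uncurry g) :=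
    hf.indicator (measurableSet_le measurable_snd measurable_fst)
  calc ∫⁻ t in Ioc a b, ∫⁻ z in Ioc a t, f t z
      = ∫⁻ t in Ioc a b, ∫⁻ z in Ioc a b, g t z := by
        refine setLIntegral_congr_fun measurableSet_Ioc fun t ht => ?_
        have hcut : Iic t ∩ Ioc a b = Ioc a t := by
          ext z; simp only [mem_inter_iff, mem_Iic, mem_Ioc]
          exact ⟨fun h => ⟨h.2.1, h.1⟩, fun h => ⟨h.2, h.1, h.2.trans ht.2⟩⟩
        rw [← hcut, ← Measure.restrict_restrict measurableSet_Iic,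
          ← lintegral_indicator measurableSet_Iic]
        rfl
    _ = ∫⁻ z in Ioc a b, ∫⁻ t in Ioc a b, g t z := lintegral_lintegral_swap hg.aemeasurable
    _ = ∫⁻ z in Ioc a b, ∫⁻ t in Ioc z b, f t z := by
        refine setLIntegral_congr_fun measurableSet_Ioc fun z hz => ?_
        have hcut : Ici z ∩ Ioc a b = Icc z b := by
          ext t; simp only [mem_inter_iff, mem_Ici, mem_Ioc, mem_Icc]
          exact ⟨fun h => ⟨h.1, h.2.2⟩, fun h => ⟨h.1, hz.1.trans_le h.1, h.2⟩⟩
        rw [Measure.restrict_congr_set (Ioc_ae_eq_Icc : Ioc z b =ᵐ[volume] Icc z b), ← hcut,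
          ← Measure.restrict_restrict measurableSet_Ici, ← lintegral_indicator measurableSet_Ici]
        rfl

theorem enorm_psiCaputo_le {δ γ t : ℝ} (hδ0 : 0 < δ) (hδ1 : δ < 1) (hγ0 : 0 < γ) (hγ1 : γ ≤ 1)
    (ht : 0 ≤ t) (w : ℝ → ℝ) :
    ‖psiCaputo δ γ w t‖ₑ ≤ ENNReal.ofReal (t ^ (-((1 / γ - 1) * δ)) / Gamma (1 - δ)) *
      ∫⁻ z in Ioc 0 t, ENNReal.ofReal ((t - z) ^ (-δ)) * ‖w z‖ₑ := by
  have hG : 0 < Gamma (1 - δ) := Gamma_pos_of_pos (by linarith)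
  have hm : 1 ≤ 1 / γ := by rw [le_div_iff₀ hγ0]; linarith
  set c := t ^ (-((1 / γ - 1) * δ))
  have hc : 0 ≤ c := rpow_nonneg ht _
  unfold psiCaputo
  rw [enorm_mul, intervalIntegral.integral_of_le ht, Real.enorm_of_nonneg (by positivity)]
  calc ENNReal.ofReal (1 / Gamma (1 - δ)) *
        ‖∫ z in Ioc 0 t, (t ^ (1 / γ) - z ^ (1 / γ)) ^ (-δ) * w z‖ₑ
      ≤ ENNReal.ofReal (1 / Gamma (1 - δ)) *
          ∫⁻ z in Ioc 0 t, ‖(t ^ (1 / γ) - z ^ (1 / γ)) ^ (-δ) * w z‖ₑ := by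
        gcongr; exact enorm_integral_le_lintegral_enorm _
    _ ≤ ENNReal.ofReal (1 / Gamma (1 - δ)) *
          ∫⁻ z in Ioc 0 t, ENNReal.ofReal c * (ENNReal.ofReal ((t - z) ^ (-δ)) * ‖w z‖ₑ) := by
        refine mul_le_mul_right (setLIntegral_mono' measurableSet_Ioc fun z hz => ?_) _
        have hzt : z ≤ t := hz.2
        rw [enorm_mul, Real.enorm_of_nonneg (rpow_nonneg (sub_nonneg.2
          (rpow_le_rpow hz.1.le hzt (by linarith))) _), ← mul_assoc,
          ← ENNReal.ofReal_mul hc]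
        gcongr
        exact rpow_sub_rpow_rpow_neg_le hm hδ0 hz.1.le hzt
    _ = _ := by
        rw [lintegral_const_mul' _ _ ENNReal.ofReal_ne_top, ← mul_assoc,
          ← ENNReal.ofReal_mul (by positivity)]
        ring_nf

theorem rpow_mul_rpow_sq_mul_rpow_le_one {δ γ t : ℝ} (hδ0 : 0 ≤ δ) (hδ1 : δ ≤ 1) (hγ : 0 < γ)
    (ht0 : 0 < t) (ht1 : t ≤ 1) :
    t ^ (2 / γ - 1) * (t ^ (-((1 / γ - 1) * δ))) ^ 2 * t ^ (1 - δ) ≤ 1 := by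
  rw [sq, ← rpow_add ht0, ← rpow_add ht0, ← rpow_add ht0]
  refine rpow_le_one ht0.le ht1 ?_
  have hexp : 0 ≤ 2 * (1 - δ) / γ + δ := by have := sub_nonneg.2 hδ1; positivity
  convert hexp using 1
  field_simp
  ring

theorem enorm_rpow_mul_psiCaputo_sq_le {δ γ t : ℝ} (hδ0 : 0 < δ) (hδ1 : δ < 1) (hγ0 : 0 < γ)
    (hγ1 : γ ≤ 1) (ht0 : 0 < t) (ht1 : t ≤ 1) {w : ℝ → ℝ} (hw : Measurable w) :
    ‖t ^ (2 / γ - 1) * psiCaputo δ γ w t ^ 2‖ₑ ≤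
      ENNReal.ofReal (1 / ((1 - δ) * Gamma (1 - δ) ^ 2)) *
        ∫⁻ z in Ioc 0 t, ENNReal.ofReal ((t - z) ^ (-δ)) * ‖w z‖ₑ ^ 2 := by
  have hG : 0 < Gamma (1 - δ) := Gamma_pos_of_pos (by linarith)
  set c := t ^ (-((1 / γ - 1) * δ))
  set B := ∫⁻ z in Ioc 0 t, ENNReal.ofReal ((t - z) ^ (-δ)) * ‖w z‖ₑ ^ 2
  have hkernel : ∫⁻ z in Ioc 0 t, ENNReal.ofReal ((t - z) ^ (-δ)) =
      ENNReal.ofReal (t ^ (1 - δ) / (1 - δ)) := by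
    simpa [neg_add_eq_sub] using lintegral_Ioc_sub_rpow ht0.le (r := -δ) (by linarith)
  calc ‖t ^ (2 / γ - 1) * psiCaputo δ γ w t ^ 2‖ₑ
      = ENNReal.ofReal (t ^ (2 / γ - 1)) * ‖psiCaputo δ γ w t‖ₑ ^ 2 := by
        rw [enorm_mul, enorm_pow, Real.enorm_of_nonneg (rpow_nonneg ht0.le _)]
    _ ≤ ENNReal.ofReal (t ^ (2 / γ - 1)) * (ENNReal.ofReal (c / Gamma (1 - δ)) *
          ∫⁻ z in Ioc 0 t, ENNReal.ofReal ((t - z) ^ (-δ)) * ‖w z‖ₑ) ^ 2 := by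
        gcongr; exact enorm_psiCaputo_le hδ0 hδ1 hγ0 hγ1 ht0.le w
    _ ≤ ENNReal.ofReal (t ^ (2 / γ - 1)) * (ENNReal.ofReal (c / Gamma (1 - δ)) ^ 2 *
          (ENNReal.ofReal (t ^ (1 - δ) / (1 - δ)) * B)) := by
        rw [mul_pow, ← hkernel]
        gcongr
        exact sq_lintegral_mul_le (by fun_prop) (by fun_prop)
    _ = ENNReal.ofReal (t ^ (2 / γ - 1) * (c / Gamma (1 - δ)) ^ 2 * (t ^ (1 - δ) / (1 - δ))) *
          B := by
        rw [ENNReal.ofReal_mul (by positivity), ENNReal.ofReal_mul (by positivity),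
          ENNReal.ofReal_pow (by positivity)]
        ring
    _ ≤ ENNReal.ofReal (1 / ((1 - δ) * Gamma (1 - δ) ^ 2)) * B := by
        gcongr
        rw [show t ^ (2 / γ - 1) * (c / Gamma (1 - δ)) ^ 2 * (t ^ (1 - δ) / (1 - δ)) =
            t ^ (2 / γ - 1) * c ^ 2 * t ^ (1 - δ) * (1 / ((1 - δ) * Gamma (1 - δ) ^ 2)) by
          field_simp]
        exact mul_le_of_le_one_left (by positivity)
          (rpow_mul_rpow_sq_mul_rpow_le_one hδ0.le hδ1.le hγ0 ht0 ht1)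

theorem lintegral_one_sub_rpow_mul_lintegral_sub_rpow_le {δ α : ℝ} (hδ1 : δ < 1) (hα0 : 0 ≤ α)
    (hδα : δ ≤ 2 * α) {W : ℝ → ℝ≥0∞} (hW : Measurable W) :
    ∫⁻ t in Ioc 0 1, ENNReal.ofReal ((1 - t) ^ α) *
        ∫⁻ z in Ioc 0 t, ENNReal.ofReal ((t - z) ^ (-δ)) * W z ≤
      ENNReal.ofReal (1 / (1 - δ)) * ∫⁻ z in Ioc 0 1, ENNReal.ofReal ((1 - z) ^ (1 - α)) * W z := by
  have hd : 0 < 1 - δ := by linarith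
  have hweight : ∀ z ∈ Ioc (0 : ℝ) 1,
      (1 - z) ^ α * ((1 - z) ^ (1 - δ) / (1 - δ)) ≤ 1 / (1 - δ) * (1 - z) ^ (1 - α) := by
    intro z hz
    rw [← mul_div_assoc, ← rpow_add' (by linarith [hz.2]) (by linarith), div_mul_eq_mul_div,
      one_mul]
    refine div_le_div_of_nonneg_right ?_ hd.le
    rcases (sub_nonneg.2 hz.2).eq_or_lt with h | h
    · rw [← h, zero_rpow (by linarith)]; exact rpow_nonneg le_rfl _
    · exact rpow_le_rpow_of_exponent_ge h (by linarith [hz.1]) (by linarith)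
  calc ∫⁻ t in Ioc 0 1, ENNReal.ofReal ((1 - t) ^ α) *
        ∫⁻ z in Ioc 0 t, ENNReal.ofReal ((t - z) ^ (-δ)) * W z
      = ∫⁻ t in Ioc 0 1, ∫⁻ z in Ioc 0 t,
          ENNReal.ofReal ((1 - t) ^ α) * ENNReal.ofReal ((t - z) ^ (-δ)) * W z := by
        simp_rw [mul_assoc, lintegral_const_mul' _ _ ENNReal.ofReal_ne_top]
    _ = ∫⁻ z in Ioc 0 1, ∫⁻ t in Ioc z 1,
          ENNReal.ofReal ((1 - t) ^ α) * ENNReal.ofReal ((t - z) ^ (-δ)) * W z :=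
        lintegral_Ioc_lintegral_Ioc_swap (by fun_prop) 0 1
    _ ≤ ∫⁻ z in Ioc 0 1, ENNReal.ofReal (1 / (1 - δ)) *
          (ENNReal.ofReal ((1 - z) ^ (1 - α)) * W z) := by
        refine setLIntegral_mono' measurableSet_Ioc fun z hz => ?_
        calc ∫⁻ t in Ioc z 1, ENNReal.ofReal ((1 - t) ^ α) * ENNReal.ofReal ((t - z) ^ (-δ)) * W z
            ≤ ∫⁻ t in Ioc z 1,
                ENNReal.ofReal ((1 - z) ^ α) * ENNReal.ofReal ((t - z) ^ (-δ)) * W z := by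
              refine setLIntegral_mono' measurableSet_Ioc fun t ht => ?_
              gcongr
              · linarith [ht.2]
              · exact ht.1.le
          _ = ENNReal.ofReal ((1 - z) ^ α * ((1 - z) ^ (1 - δ) / (1 - δ))) * W z := by
              rw [lintegral_mul_const _ (by fun_prop),
                lintegral_const_mul' _ _ ENNReal.ofReal_ne_top,
                lintegral_Ioc_rpow_sub hz.2 (by linarith), neg_add_eq_sub,
                ← ENNReal.ofReal_mul (rpow_nonneg (by linarith [hz.2]) _)]
          _ ≤ _ := by
              rw [← mul_assoc, ← ENNReal.ofReal_mul (by positivity)]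
              exact mul_le_mul_left (ENNReal.ofReal_le_ofReal (hweight z hz)) _
    _ = _ := lintegral_const_mul' _ _ ENNReal.ofReal_ne_top

theorem integral_le_of_lintegral_enorm_le {α : Type*} [MeasurableSpace α] {μ : Measure α}
    {f : α → ℝ} {c : ℝ} (hc : 0 ≤ c) (h : ∫⁻ x, ‖f x‖ₑ ∂μ ≤ ENNReal.ofReal c) :
    ∫ x, f x ∂μ ≤ c := by
  refine (ENNReal.ofReal_le_ofReal_iff hc).1 ?_
  calc ENNReal.ofReal (∫ x, f x ∂μ) ≤ ‖∫ x, f x ∂μ‖ₑ := by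
        rw [Real.enorm_eq_ofReal_abs]; exact ENNReal.ofReal_le_ofReal (le_abs_self _)
    _ ≤ ∫⁻ x, ‖f x‖ₑ ∂μ := enorm_integral_le_lintegral_enorm f
    _ ≤ ENNReal.ofReal c := h

theorem lintegral_enorm_weighted_psiCaputo_sq_le {δ γ α : ℝ} (hδ0 : 0 < δ) (hδ1 : δ < 1)
    (hγ0 : 0 < γ) (hγ1 : γ ≤ 1) (hα0 : 0 ≤ α) (hδα : δ ≤ 2 * α) {w : ℝ → ℝ} (hw : Measurable w) :
    ∫⁻ t in Ioc 0 1, ‖(1 - t) ^ α * t ^ (2 / γ - 1) * psiCaputo δ γ w t ^ 2‖ₑ ≤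
      ENNReal.ofReal (1 / ((1 - δ) ^ 2 * Gamma (1 - δ) ^ 2)) *
        ∫⁻ t in Ioc 0 1, ENNReal.ofReal ((1 - t) ^ (1 - α)) * ‖w t‖ₑ ^ 2 := by
  have hd : 0 < 1 - δ := by linarith
  have hG : 0 < Gamma (1 - δ) := Gamma_pos_of_pos hd
  calc ∫⁻ t in Ioc 0 1, ‖(1 - t) ^ α * t ^ (2 / γ - 1) * psiCaputo δ γ w t ^ 2‖ₑ
      ≤ ∫⁻ t in Ioc 0 1, ENNReal.ofReal (1 / ((1 - δ) * Gamma (1 - δ) ^ 2)) *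
          (ENNReal.ofReal ((1 - t) ^ α) *
            ∫⁻ z in Ioc 0 t, ENNReal.ofReal ((t - z) ^ (-δ)) * ‖w z‖ₑ ^ 2) := by
        refine setLIntegral_mono' measurableSet_Ioc fun t ht => ?_
        rw [mul_assoc, enorm_mul, Real.enorm_of_nonneg (rpow_nonneg (by linarith [ht.2]) _),
          mul_left_comm]
        exact mul_le_mul_right
          (enorm_rpow_mul_psiCaputo_sq_le hδ0 hδ1 hγ0 hγ1 ht.1 ht.2 hw) _
    _ ≤ ENNReal.ofReal (1 / ((1 - δ) * Gamma (1 - δ) ^ 2)) * (ENNReal.ofReal (1 / (1 - δ)) *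
          ∫⁻ t in Ioc 0 1, ENNReal.ofReal ((1 - t) ^ (1 - α)) * ‖w t‖ₑ ^ 2) := by
        rw [lintegral_const_mul' _ _ ENNReal.ofReal_ne_top]
        exact mul_le_mul_right
          (lintegral_one_sub_rpow_mul_lintegral_sub_rpow_le hδ1 hα0 hδα (by fun_prop)) _
    _ = _ := by
        rw [← mul_assoc, ← ENNReal.ofReal_mul (by positivity)]
        congr 2
        field_simp

theorem integral_weighted_psiCaputo_sq_le {δ γ α : ℝ} (hδ0 : 0 < δ) (hδ1 : δ < 1) (hγ0 : 0 < γ)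
    (hγ1 : γ ≤ 1) (hα0 : 0 ≤ α) (hδα : δ ≤ 2 * α) {w : ℝ → ℝ} (hw : Measurable w)
    (hR : IntegrableOn (fun t => (1 - t) ^ (1 - α) * w t ^ 2) (Ioc 0 1)) :
    ∫ t in (0:ℝ)..1, (1 - t) ^ α * t ^ (2 / γ - 1) * psiCaputo δ γ w t ^ 2 ≤
      1 / ((1 - δ) ^ 2 * Gamma (1 - δ) ^ 2) * ∫ t in (0:ℝ)..1, (1 - t) ^ (1 - α) * w t ^ 2 := by
  have hR0 : ∀ t ∈ Ioc (0 : ℝ) 1, 0 ≤ (1 - t) ^ (1 - α) * w t ^ 2 := fun t ht =>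
    mul_nonneg (rpow_nonneg (by linarith [ht.2]) _) (sq_nonneg _)
  have hRlint : ∫⁻ t in Ioc 0 1, ENNReal.ofReal ((1 - t) ^ (1 - α)) * ‖w t‖ₑ ^ 2 =
      ENNReal.ofReal (∫ t in Ioc 0 1, (1 - t) ^ (1 - α) * w t ^ 2) := by
    rw [ofReal_integral_eq_lintegral_ofReal hR ((ae_restrict_iff' measurableSet_Ioc).2
      (ae_of_all _ hR0))]
    refine setLIntegral_congr_fun measurableSet_Ioc fun t ht => ?_
    rw [ENNReal.ofReal_mul (rpow_nonneg (by linarith [ht.2]) _), Real.enorm_eq_ofReal_abs,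
      ← ENNReal.ofReal_pow (abs_nonneg _), sq_abs]
  have hC : 0 ≤ 1 / ((1 - δ) ^ 2 * Gamma (1 - δ) ^ 2) := by positivity
  rw [intervalIntegral.integral_of_le zero_le_one, intervalIntegral.integral_of_le zero_le_one]
  refine integral_le_of_lintegral_enorm_le
    (mul_nonneg hC (setIntegral_nonneg measurableSet_Ioc hR0)) ?_
  rw [ENNReal.ofReal_mul hC, ← hRlint]
  exact lintegral_enorm_weighted_psiCaputo_sq_le hδ0 hδ1 hγ0 hγ1 hα0 hδα hw

theorem psiCaputo_congr {δ γ t : ℝ} {f g : ℝ → ℝ} (h : EqOn f g (uIcc 0 t)) :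
    psiCaputo δ γ f t = psiCaputo δ γ g t := by
  unfold psiCaputo
  congr 1
  exact intervalIntegral.integral_congr fun z hz => by simp only [h hz]

/-- Weighted L² bound for the rescaled fractional kernel operator (Lemma 3.3). -/
theorem weighted_L2_bound_rescaled_kernel
    (δ γ α : ℝ) (hδ0 : 0 < δ) (hδ1 : δ < 1) (hγ0 : 0 < γ) (hγ1 : γ ≤ 1)
    (hα1 : δ < α) (hα2 : α < 1) :
    ∃ C : ℝ, 0 < C ∧ ∀ v v' : ℝ → ℝ,
      (∀ t ∈ Set.Icc (0:ℝ) 1, HasDerivAt v (v' t) t) →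
      ContinuousOn v' (Set.Icc (0:ℝ) 1) →
      ∫ t in (0:ℝ)..1, (1 - t) ^ α * t ^ (2/γ - 1) * (psiCaputo δ γ v' t) ^ 2
        ≤ C * ∫ t in (0:ℝ)..1, (1 - t) ^ (1 - α) * (v' t) ^ 2 := by
  have hG : 0 < Gamma (1 - δ) := Gamma_pos_of_pos (by linarith)
  refine ⟨1 / ((1 - δ) ^ 2 * Gamma (1 - δ) ^ 2), by positivity, fun v v' _ hv' => ?_⟩
  -- only the values of `v'` on `[0, 1]` enter, so we may replace it by a continuous extension
  set w : ℝ → ℝ := fun z => v' (projIcc 0 1 zero_le_one z)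
  have hw : Continuous w :=
    hv'.comp_continuous (continuous_subtype_val.comp continuous_projIcc) fun z =>
      (projIcc _ _ _ z).2
  have hwv : EqOn w v' (Icc 0 1) := fun z hz => by simp only [w, projIcc_of_mem _ hz]
  have hR : IntegrableOn (fun t => (1 - t) ^ (1 - α) * w t ^ 2) (Ioc 0 1) :=
    (((continuous_const.sub continuous_id).rpow_const fun _ => .inr (by linarith)).mul
      (hw.pow 2)).integrableOn_Ioc
  have hwv' : ∀ t ∈ uIcc (0 : ℝ) 1, EqOn w v' (uIcc 0 t) := fun t ht =>
    hwv.mono ((uIcc_subset_uIcc_left ht).trans_eq (uIcc_of_le zero_le_one))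
  convert integral_weighted_psiCaputo_sq_le hδ0 hδ1 hγ0 hγ1 (by linarith) (by linarith)
    hw.measurable hR using 1
  · exact intervalIntegral.integral_congr fun t ht => by
      simp only [psiCaputo_congr (hwv' t ht)]
  · congr 1
    exact intervalIntegral.integral_congr fun t ht => by
      simp only [hwv ((uIcc_of_le zero_le_one).subset ht)]
end

section
/- (Second integral bound in the proof of Lemma 3.3.) Let δ < α < 1. For all t ∈ (0,1], ∫_0^t (t^{1/γ} - y^{1/γ})^{-δ} (1-y)^{α-1} dy ≤ γ^α · B(α-δ, γ) · (t^{1/γ})^{α-δ+γ-1}. The proof uses the elementary inequality 1 - y^γ ≥ γ(1-y) for 0<γ≤1 and y ∈ (0,1). -/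
open MeasureTheory Real

/-- Elementary inequality `γ(1-z) ≤ 1 - z^γ` for `0 < γ ≤ 1`, `0 ≤ z ≤ 1`. -/
lemma aux_one_sub_rpow {γ z : ℝ} (hγ0 : 0 < γ) (hγ1 : γ ≤ 1) (hz0 : 0 ≤ z) (hz1 : z ≤ 1) :
    γ * (1 - z) ≤ 1 - z ^ γ := by
  have h := Real.geom_mean_le_arith_mean2_weighted hγ0.le (by linarith : (0:ℝ) ≤ 1 - γ)
      hz0 zero_le_one (by ring)
  rw [Real.one_rpow, mul_one] at h
  nlinarith

/-- Interval integrability of the scaled Beta integrand. -/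
lemma aux_betaIntegrable {u v : ℝ} (hu : 0 < u) (hv : 0 < v) {c : ℝ} (hc : 0 < c) :
    IntervalIntegrable (fun x : ℝ => x ^ (u - 1) * (c - x) ^ (v - 1)) volume 0 c := by
  have I1 : IntervalIntegrable (fun x : ℝ => x ^ (u - 1)) volume 0 (c / 2) :=
    intervalIntegral.intervalIntegrable_rpow' (by linarith)
  have C1 : ContinuousOn (fun x : ℝ => (c - x) ^ (v - 1)) (Set.uIcc 0 (c / 2)) := by
    apply ContinuousOn.rpow_const (by fun_prop)
    intro x hx
    rw [Set.uIcc_of_le (by linarith)] at hx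
    exact Or.inl (sub_ne_zero.mpr (by rcases hx with ⟨_, hx2⟩; intro h; rw [h] at hx2; linarith))
  have J1 := I1.mul_continuousOn C1
  have I2' : IntervalIntegrable (fun x : ℝ => (c - x) ^ (v - 1)) volume (c - c / 2) (c - 0) :=
    (intervalIntegral.intervalIntegrable_rpow' (a := c / 2) (b := 0)
      (by linarith : (-1:ℝ) < v - 1)).comp_sub_left c
  rw [show c - c / 2 = c / 2 by ring, sub_zero] at I2'
  have C2 : ContinuousOn (fun x : ℝ => x ^ (u - 1)) (Set.uIcc (c / 2) c) := by
    apply ContinuousOn.rpow_const (by fun_prop)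
    intro x hx
    rw [Set.uIcc_of_le (by linarith)] at hx
    exact Or.inl (by rcases hx with ⟨hx1, _⟩; intro h; rw [h] at hx1; linarith)
  have J2 := I2'.continuousOn_mul C2
  exact J1.trans J2

/-- Real version of the scaled Beta integral evaluation. -/
lemma aux_betaEval {u v : ℝ} (hu : 0 < u) (hv : 0 < v) {c : ℝ} (hc : 0 < c) :
    ∫ x in (0:ℝ)..c, x ^ (u - 1) * (c - x) ^ (v - 1) =
      c ^ (u + v - 1) * (Real.Gamma u * Real.Gamma v / Real.Gamma (u + v)) := by
  have hGpos : 0 < Real.Gamma (u + v) := Real.Gamma_pos_of_pos (by linarith)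
  have hGne : Complex.Gamma ((u : ℂ) + v) ≠ 0 := by
    rw [← Complex.ofReal_add, Complex.Gamma_ofReal]
    exact_mod_cast hGpos.ne'
  have hbetaC : Complex.betaIntegral u v =
      Complex.Gamma u * Complex.Gamma v / Complex.Gamma ((u:ℂ) + v) := by
    rw [eq_div_iff hGne, mul_comm]
    exact (Complex.Gamma_mul_Gamma_eq_betaIntegral (by simpa using hu) (by simpa using hv)).symm
  have key := Complex.betaIntegral_scaled (u:ℂ) (v:ℂ) hc
  have hcongr : (∫ x in (0:ℝ)..c, (x:ℂ) ^ ((u:ℂ) - 1) * ((c:ℂ) - x) ^ ((v:ℂ) - 1))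
      = ((∫ x in (0:ℝ)..c, x ^ (u - 1) * (c - x) ^ (v - 1) : ℝ) : ℂ) := by
    rw [← intervalIntegral.integral_ofReal]
    apply intervalIntegral.integral_congr
    intro x hx
    rw [Set.uIcc_of_le hc.le, Set.mem_Icc] at hx
    show (x:ℂ) ^ ((u:ℂ) - 1) * ((c:ℂ) - x) ^ ((v:ℂ) - 1) = ((x ^ (u - 1) * (c - x) ^ (v - 1) : ℝ) : ℂ)
    rw [Complex.ofReal_mul, Complex.ofReal_cpow hx.1,
      Complex.ofReal_cpow (by linarith [hx.2] : (0:ℝ) ≤ c - x)]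
    push_cast
    ring
  rw [hcongr, hbetaC] at key
  have hrhs : (c:ℂ) ^ ((u:ℂ) + (v:ℂ) - 1) *
        (Complex.Gamma u * Complex.Gamma v / Complex.Gamma ((u:ℂ) + v))
      = ((c ^ (u + v - 1) * (Real.Gamma u * Real.Gamma v / Real.Gamma (u + v)) : ℝ) : ℂ) := by
    rw [show ((u:ℂ) + (v:ℂ) - 1) = ((u + v - 1 : ℝ) : ℂ) by push_cast; ring,
      ← Complex.ofReal_cpow hc.le, ← Complex.ofReal_add, Complex.Gamma_ofReal,
      Complex.Gamma_ofReal, Complex.Gamma_ofReal]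
    norm_cast
  rw [hrhs] at key
  exact_mod_cast key

/-- Second integral bound in the proof of Lemma 3.3:
`∫_0^t (t^{1/γ} - y^{1/γ})^{-δ} (1-y)^{α-1} dy ≤ γ^α B(α-δ,γ) (t^{1/γ})^{α-δ+γ-1}`,
where `B(x,y) = Γ(x)Γ(y)/Γ(x+y)`. -/
theorem second_integral_bound
    (δ γ α : ℝ) (hδ0 : 0 < δ) (hδ1 : δ < 1) (hγ0 : 0 < γ) (hγ1 : γ ≤ 1)
    (hα1 : δ < α) (hα2 : α < 1) (t : ℝ) (ht : t ∈ Set.Ioc (0:ℝ) 1) :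
    ∫ y in (0:ℝ)..t, (t ^ (1/γ) - y ^ (1/γ)) ^ (-δ) * (1 - y) ^ (α - 1)
      ≤ γ ^ α * (Real.Gamma (α - δ) * Real.Gamma γ / Real.Gamma (α - δ + γ)) *
          (t ^ (1/γ)) ^ (α - δ + γ - 1) := by
  obtain ⟨ht0, ht1⟩ := ht
  set s := t ^ (1/γ) with hs_def
  have hs0 : 0 < s := Real.rpow_pos_of_pos ht0 _
  have hs1 : s ≤ 1 := Real.rpow_le_one ht0.le ht1 (by positivity)
  have hsγ : s ^ γ = t := by
    rw [hs_def, ← Real.rpow_mul ht0.le, one_div_mul_cancel hγ0.ne', Real.rpow_one]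
  have hαδ : 0 < α - δ := by linarith
  -- the image of `(0,s)` under `z ↦ z^γ` is `(0,t)`
  have himg : (fun z : ℝ => z ^ γ) '' Set.Ioo 0 s = Set.Ioo 0 t := by
    ext y
    constructor
    · rintro ⟨z, hz, rfl⟩
      refine ⟨Real.rpow_pos_of_pos hz.1 _, ?_⟩
      calc z ^ γ < s ^ γ := Real.rpow_lt_rpow hz.1.le hz.2 hγ0
        _ = t := hsγ
    · intro hy
      refine ⟨y ^ (1/γ), ⟨Real.rpow_pos_of_pos hy.1 _, ?_⟩, ?_⟩
      · exact Real.rpow_lt_rpow hy.1.le hy.2 (by positivity)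
      · show (y ^ (1/γ)) ^ γ = y
        rw [← Real.rpow_mul hy.1.le, one_div_mul_cancel hγ0.ne', Real.rpow_one]
  have hder : ∀ z ∈ Set.Ioo (0:ℝ) s, HasDerivWithinAt (fun x : ℝ => x ^ γ)
      (γ * z ^ (γ - 1)) (Set.Ioo 0 s) z := fun z hz =>
    (Real.hasDerivAt_rpow_const (Or.inl hz.1.ne')).hasDerivWithinAt
  have hinj : Set.InjOn (fun z : ℝ => z ^ γ) (Set.Ioo 0 s) := by
    intro a ha b hb hab
    have hab' : a ^ γ = b ^ γ := hab
    have h1 : (a ^ γ) ^ (1/γ) = (b ^ γ) ^ (1/γ) := by rw [hab']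
    rwa [← Real.rpow_mul ha.1.le, ← Real.rpow_mul hb.1.le,
      mul_one_div_cancel hγ0.ne', Real.rpow_one, Real.rpow_one] at h1
  have hchange : (∫ y in Set.Ioo (0:ℝ) t, (s - y ^ (1/γ)) ^ (-δ) * (1 - y) ^ (α - 1))
      = ∫ z in Set.Ioo (0:ℝ) s, |γ * z ^ (γ - 1)| •
          ((s - (z ^ γ) ^ (1/γ)) ^ (-δ) * (1 - z ^ γ) ^ (α - 1)) := by
    rw [← himg]
    exact MeasureTheory.integral_image_eq_integral_abs_deriv_smul measurableSet_Ioo hder hinj _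
  have hsimp : (∫ z in Set.Ioo (0:ℝ) s, |γ * z ^ (γ - 1)| •
          ((s - (z ^ γ) ^ (1/γ)) ^ (-δ) * (1 - z ^ γ) ^ (α - 1)))
      = ∫ z in Set.Ioo (0:ℝ) s,
          γ * z ^ (γ - 1) * ((s - z) ^ (-δ) * (1 - z ^ γ) ^ (α - 1)) := by
    apply setIntegral_congr_fun measurableSet_Ioo
    intro z hz
    have hz0 : (0:ℝ) < z := hz.1
    have hzz : (z ^ γ) ^ (1/γ) = z := by
      rw [← Real.rpow_mul hz0.le, mul_one_div_cancel hγ0.ne', Real.rpow_one]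
    show |γ * z ^ (γ - 1)| • ((s - (z ^ γ) ^ (1/γ)) ^ (-δ) * (1 - z ^ γ) ^ (α - 1))
      = γ * z ^ (γ - 1) * ((s - z) ^ (-δ) * (1 - z ^ γ) ^ (α - 1))
    rw [hzz, abs_of_pos (by positivity), smul_eq_mul]
  have hgint : IntegrableOn
      (fun z : ℝ => γ ^ α * (z ^ (γ - 1) * (s - z) ^ (α - δ - 1))) (Set.Ioo 0 s) := by
    have h := (intervalIntegrable_iff_integrableOn_Ioc_of_le hs0.le).mp
      (aux_betaIntegrable hγ0 hαδ hs0)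
    exact (h.mono_set Set.Ioo_subset_Ioc_self).const_mul _
  have hmono : (∫ z in Set.Ioo (0:ℝ) s,
          γ * z ^ (γ - 1) * ((s - z) ^ (-δ) * (1 - z ^ γ) ^ (α - 1)))
      ≤ ∫ z in Set.Ioo (0:ℝ) s, γ ^ α * (z ^ (γ - 1) * (s - z) ^ (α - δ - 1)) := by
    refine MeasureTheory.integral_mono_of_nonneg ?_ hgint ?_
    · filter_upwards [ae_restrict_mem measurableSet_Ioo] with z hz
      have hzt : z ^ γ ≤ 1 := by
        calc z ^ γ ≤ s ^ γ := Real.rpow_le_rpow hz.1.le hz.2.le hγ0.le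
          _ = t := hsγ
          _ ≤ 1 := ht1
      have h2 : (0:ℝ) ≤ 1 - z ^ γ := by linarith
      have h3 : (0:ℝ) ≤ s - z := by linarith [hz.2]
      exact mul_nonneg (mul_nonneg hγ0.le (Real.rpow_nonneg hz.1.le _))
        (mul_nonneg (Real.rpow_nonneg h3 _) (Real.rpow_nonneg h2 _))
    · filter_upwards [ae_restrict_mem measurableSet_Ioo] with z hz
      obtain ⟨hz0, hzs⟩ := hz
      have hsz : 0 < s - z := by linarith
      have hz1 : z ≤ 1 := by linarith
      have key : γ * (s - z) ≤ 1 - z ^ γ := by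
        calc γ * (s - z) ≤ γ * (1 - z) :=
              mul_le_mul_of_nonneg_left (by linarith) hγ0.le
          _ ≤ 1 - z ^ γ := aux_one_sub_rpow hγ0 hγ1 hz0.le hz1
      have h1 : (1 - z ^ γ) ^ (α - 1) ≤ (γ * (s - z)) ^ (α - 1) :=
        Real.rpow_le_rpow_of_nonpos (by positivity) key (by linarith)
      have h2 : (γ * (s - z)) ^ (α - 1) = γ ^ (α - 1) * (s - z) ^ (α - 1) :=
        Real.mul_rpow hγ0.le hsz.le
      have h3 : γ * γ ^ (α - 1) = γ ^ α := by
        have h := Real.rpow_add hγ0 1 (α - 1)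
        rw [Real.rpow_one] at h
        rw [← h]
        congr 1
        ring
      have h4 : (s - z) ^ (-δ) * (s - z) ^ (α - 1) = (s - z) ^ (α - δ - 1) := by
        rw [← Real.rpow_add hsz]
        congr 1
        ring
      have hb1 : 0 ≤ γ * z ^ (γ - 1) := by positivity
      have hb2 : 0 ≤ (s - z) ^ (-δ) := Real.rpow_nonneg hsz.le _
      calc γ * z ^ (γ - 1) * ((s - z) ^ (-δ) * (1 - z ^ γ) ^ (α - 1))
          ≤ γ * z ^ (γ - 1) * ((s - z) ^ (-δ) * (γ ^ (α - 1) * (s - z) ^ (α - 1))) := by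
            refine mul_le_mul_of_nonneg_left ?_ hb1
            refine mul_le_mul_of_nonneg_left ?_ hb2
            rw [← h2]
            exact h1
        _ = γ ^ α * (z ^ (γ - 1) * (s - z) ^ (α - δ - 1)) := by
            rw [← h4, ← h3]
            ring
  have heval : (∫ z in Set.Ioo (0:ℝ) s, γ ^ α * (z ^ (γ - 1) * (s - z) ^ (α - δ - 1)))
      = γ ^ α * (Real.Gamma (α - δ) * Real.Gamma γ / Real.Gamma (α - δ + γ)) *
          s ^ (α - δ + γ - 1) := by
    rw [← MeasureTheory.integral_Ioc_eq_integral_Ioo,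
      ← intervalIntegral.integral_of_le hs0.le,
      intervalIntegral.integral_const_mul,
      aux_betaEval hγ0 hαδ hs0,
      show γ + (α - δ) = α - δ + γ by ring]
    ring
  calc ∫ y in (0:ℝ)..t, (s - y ^ (1/γ)) ^ (-δ) * (1 - y) ^ (α - 1)
      = ∫ y in Set.Ioo (0:ℝ) t, (s - y ^ (1/γ)) ^ (-δ) * (1 - y) ^ (α - 1) := by
        rw [intervalIntegral.integral_of_le ht0.le,
          MeasureTheory.integral_Ioc_eq_integral_Ioo]
    _ = ∫ z in Set.Ioo (0:ℝ) s, |γ * z ^ (γ - 1)| •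
          ((s - (z ^ γ) ^ (1/γ)) ^ (-δ) * (1 - z ^ γ) ^ (α - 1)) := hchange
    _ = ∫ z in Set.Ioo (0:ℝ) s,
          γ * z ^ (γ - 1) * ((s - z) ^ (-δ) * (1 - z ^ γ) ^ (α - 1)) := hsimp
    _ ≤ ∫ z in Set.Ioo (0:ℝ) s, γ ^ α * (z ^ (γ - 1) * (s - z) ^ (α - δ - 1)) := hmono
    _ = γ ^ α * (Real.Gamma (α - δ) * Real.Gamma γ / Real.Gamma (α - δ + γ)) *
          s ^ (α - δ + γ - 1) := heval
end
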